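/- If P, Q, R satisfy Ramanujan's differential system, then 6R·δ²R − 7(δR)² = −3024·Q·Δ where Δ = (Q³−R²)/1728. -/

import Mathlib

/-!
The Euler operator `δ = q d/dq` is a derivation, so differentiating the third equation of the
system gives `δ²R = δ((PR − Q²)/2) = (δP·R + P·δR − 2Q·δQ)/2`. Substituting the system for
`δP`, `δQ`, `δR` turns the claim into a polynomial identity in `P`, `Q`, `R`.
-/

section EulerDeriv

variable {𝕜 : Type*} [NontriviallyNormedField 𝕜] {f g : 𝕜 → 𝕜} {x : 𝕜}

noncomputable def eulerDeriv (f : 𝕜 → 𝕜) (x : 𝕜) : 𝕜 := x * deriv f x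

theorem eulerDeriv_sub (hf : DifferentiableAt 𝕜 f x) (hg : DifferentiableAt 𝕜 g x) :
    eulerDeriv (fun y => f y - g y) x = eulerDeriv f x - eulerDeriv g x := by
  simp only [eulerDeriv, deriv_fun_sub hf hg, mul_sub]

theorem eulerDeriv_mul (hf : DifferentiableAt 𝕜 f x) (hg : DifferentiableAt 𝕜 g x) :
    eulerDeriv (fun y => f y * g y) x = eulerDeriv f x * g x + f x * eulerDeriv g x := by
  simp only [eulerDeriv, deriv_fun_mul hf hg]
  ring

theorem eulerDeriv_pow (hf : DifferentiableAt 𝕜 f x) (n : ℕ) :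
    eulerDeriv (fun y => f y ^ n) x = n * f x ^ (n - 1) * eulerDeriv f x := by
  simp only [eulerDeriv, ← Pi.pow_def, deriv_pow hf]
  ring

theorem eulerDeriv_div_const (c : 𝕜) :
    eulerDeriv (fun y => f y / c) x = eulerDeriv f x / c := by
  simp only [eulerDeriv, deriv_div_const, mul_div_assoc]

end EulerDeriv

/-- If `P, Q, R` satisfy Ramanujan's system, then `6R·δ²R − 7(δR)² = −3024·Q·Δ`
where `Δ = (Q³−R²)/1728` and `δ = q d/dq`. -/
theorem rankin_R_identity (P Q R : ℂ → ℂ)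
    (hP : ContDiff ℂ ⊤ P) (hQ : ContDiff ℂ ⊤ Q) (hR : ContDiff ℂ ⊤ R)
    (h1 : ∀ q : ℂ, q * deriv P q = (P q ^ 2 - Q q) / 12)
    (h2 : ∀ q : ℂ, q * deriv Q q = (P q * Q q - R q) / 3)
    (h3 : ∀ q : ℂ, q * deriv R q = (P q * R q - Q q ^ 2) / 2) :
    ∀ q : ℂ,
      6 * R q * (q * deriv (fun t => t * deriv R t) q) - 7 * (q * deriv R q) ^ 2 =
        -3024 * Q q * ((Q q ^ 3 - R q ^ 2) / 1728) := by
  intro q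
  have dP := hP.differentiable (by simp) q
  have dQ := hQ.differentiable (by simp) q
  have dR := hR.differentiable (by simp) q
  have δR : eulerDeriv R = fun t => (P t * R t - Q t ^ 2) / 2 := funext h3
  have δδR : eulerDeriv (eulerDeriv R) q =
      (eulerDeriv P q * R q + P q * eulerDeriv R q - 2 * Q q * eulerDeriv Q q) / 2 := by
    calc eulerDeriv (eulerDeriv R) q = eulerDeriv (fun t => (P t * R t - Q t ^ 2) / 2) q := by
          rw [δR]
      _ = _ := by
          rw [eulerDeriv_div_const, eulerDeriv_sub (dP.fun_mul dR) (dQ.fun_pow 2),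
            eulerDeriv_mul dP dR, eulerDeriv_pow dQ]
          norm_num
  change 6 * R q * eulerDeriv (eulerDeriv R) q - 7 * eulerDeriv R q ^ 2 = _
  rw [δδR]
  simp only [eulerDeriv, h1, h2, h3]
  ring
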